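/- Let κ ∈ ℂ with κ ≠ 2, and let φ be a trace map with boundary parameter κ. Then for every real K ≥ 2 and any two slopes a, b with |φ(a)| ≤ K and |φ(b)| ≤ K, there is a finite sequence of slopes a = s₀, s₁, …, s_m = b such that s_{i−1} and s_i are Farey neighbors for each i and |φ(s_i)| ≤ K for all i = 0, …, m. -/

import Mathlib

/-- A slope: an element of `ℚ ∪ {∞}`, with `∞ = none`. -/
abbrev Slope := Option ℚ

/-- The numerator of a slope in lowest terms (`∞ = 1/0`). -/
def slopeNum : Slope → ℤ
  | none => 1
  | some r => r.num

/-- The denominator of a slope in lowest terms (nonnegative, `∞ = 1/0`). -/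
def slopeDen : Slope → ℤ
  | none => 0
  | some r => (r.den : ℤ)

/-- Two slopes `p/q` and `r/s` are Farey neighbors if they are distinct and
`|p·s − q·r| = 1`. -/
def FareyNbr (s t : Slope) : Prop :=
  s ≠ t ∧ |slopeNum s * slopeDen t - slopeDen s * slopeNum t| = 1

/-- `{a,b,c}` is a Farey triple: pairwise Farey neighbors. -/
def FareyTriple (a b c : Slope) : Prop :=
  FareyNbr a b ∧ FareyNbr b c ∧ FareyNbr a c

/-- `φ` satisfies the edge relations: `φ(c) + φ(c') = φ(a)·φ(b)` whenever
`{a,b,c}` and `{a,b,c'}` are Farey triples with `c ≠ c'`. -/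
def EdgeRel (φ : Slope → ℂ) : Prop :=
  ∀ a b c c' : Slope, FareyTriple a b c → FareyTriple a b c' → c ≠ c' →
    φ c + φ c' = φ a * φ b

/-- A trace map with boundary parameter `κ`. -/
def IsTraceMap (φ : Slope → ℂ) (κ : ℂ) : Prop :=
  EdgeRel φ ∧ ∀ a b c : Slope, FareyTriple a b c →
    φ a ^ 2 + φ b ^ 2 + φ c ^ 2 - φ a * φ b * φ c = κ + 2

/-- The Bowditch Q-conditions. -/
def BQ (φ : Slope → ℂ) : Prop :=
  (∀ s : Slope, φ s ∉ Complex.ofReal '' Set.Icc (-2 : ℝ) 2) ∧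
    {s : Slope | ‖φ s‖ ≤ 2}.Finite

/-- The extended Bowditch Q-conditions. -/
def ExtBQ (φ : Slope → ℂ) : Prop :=
  (∀ s : Slope, φ s ∉ Complex.ofReal '' Set.Ioo (-2 : ℝ) 2) ∧
    {s : Slope | ‖φ s‖ ≤ 2}.Finite

noncomputable section
namespace Farey

abbrev V := ℤ × ℤ

def det2 (u v : V) : ℤ := u.1 * v.2 - u.2 * v.1

def toVec (s : Slope) : V := (slopeNum s, slopeDen s)

def mkS (v : V) : Slope := if v.2 = 0 then none else some (Rat.divInt v.1 v.2)

lemma det2_self (u : V) : det2 u u = 0 := by simp [det2]; ring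

lemma det2_comm (u v : V) : det2 v u = - det2 u v := by simp [det2]; ring

lemma toVec_coprime (s : Slope) : IsCoprime (toVec s).1 (toVec s).2 := by
  cases s with
  | none => simpa [toVec, slopeNum, slopeDen] using isCoprime_one_left (x := (0:ℤ))
  | some r =>
    rw [Int.isCoprime_iff_gcd_eq_one]
    exact r.reduced

lemma mkS_toVec (s : Slope) : mkS (toVec s) = s := by
  cases s with
  | none => simp [mkS, toVec, slopeNum, slopeDen]
  | some r =>
    simp only [mkS, toVec, slopeNum, slopeDen]
    show (if (r.den:ℤ) = 0 then none else some (Rat.divInt r.num r.den)) = some r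
    rw [if_neg (by exact_mod_cast r.den_ne_zero)]
    rw [Rat.num_divInt_den]

lemma mkS_neg (v : V) : mkS (-v) = mkS v := by
  rcases v with ⟨p, q⟩
  by_cases h : q = 0
  · simp [mkS, h]
  · simp [mkS, h, Rat.divInt_neg, Rat.neg_divInt, neg_neg]

lemma num_den_unique {p q : ℤ} (hq : 0 < q) (hco : IsCoprime p q) :
    (Rat.divInt p q).num = p ∧ ((Rat.divInt p q).den : ℤ) = q := by
  set r := Rat.divInt p q with hr
  have hq0 : q ≠ 0 := hq.ne'
  have hd0 : (r.den : ℤ) ≠ 0 := by exact_mod_cast r.den_ne_zero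
  have h1 : p * (r.den : ℤ) = r.num * q := by
    refine (Rat.divInt_eq_divInt_iff hq0 hd0).mp ?_
    rw [Rat.num_divInt_den]
  have hcor : IsCoprime r.num ((r.den : ℤ)) := by
    rw [Int.isCoprime_iff_gcd_eq_one]; exact r.reduced
  have hdq : (r.den : ℤ) ∣ q := by
    have : (r.den : ℤ) ∣ r.num * q := ⟨p, by linarith [h1]⟩
    exact (IsCoprime.dvd_of_dvd_mul_left (by exact hcor.symm) this)
  have hqd : q ∣ (r.den : ℤ) := by
    have : q ∣ p * (r.den : ℤ) := ⟨r.num, by linarith [h1]⟩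
    exact (IsCoprime.dvd_of_dvd_mul_left (by exact hco.symm) this)
  have hqq : (r.den : ℤ) = q := by
    have hd : (0:ℤ) < (r.den : ℤ) := by exact_mod_cast r.pos
    exact Int.dvd_antisymm (le_of_lt hd) (le_of_lt hq) hdq hqd
  refine ⟨?_, hqq⟩
  have := h1
  rw [hqq] at this
  exact mul_right_cancel₀ hq0 this.symm

lemma toVec_mkS {v : V} (hco : IsCoprime v.1 v.2) :
    toVec (mkS v) = v ∨ toVec (mkS v) = -v := by
  rcases v with ⟨p, q⟩
  rcases lt_trichotomy q 0 with hq | hq | hq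
  · right
    have h2 : mkS (p, q) = mkS (-p, -q) := (mkS_neg (p, q)).symm
    rw [h2]
    have hco' : IsCoprime (-p) (-q) := (hco.neg_left).neg_right
    have hq' : (0:ℤ) < -q := by linarith
    have hne : (-q) ≠ 0 := hq'.ne'
    simp only [mkS, hne, if_neg, Prod.mk.injEq] at *
    have := num_den_unique hq' hco'
    simp only [toVec, slopeNum, slopeDen, reduceIte, Prod.neg_mk]
    exact Prod.ext this.1 this.2
  · subst hq
    have : IsUnit p := isCoprime_zero_right.mp hco
    rcases Int.isUnit_iff.mp this with h | h <;> subst h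
    · left; simp [mkS, toVec, slopeNum, slopeDen]
    · right; simp [mkS, toVec, slopeNum, slopeDen]
  · left
    have hne : q ≠ 0 := hq.ne'
    have := num_den_unique hq hco
    simp only [mkS, hne, if_neg]
    simp only [toVec, slopeNum, slopeDen, reduceIte]
    exact Prod.ext this.1 this.2

lemma mkS_inj {u v : V} (hu : IsCoprime u.1 u.2) (hv : IsCoprime v.1 v.2)
    (h : mkS u = mkS v) : u = v ∨ u = -v := by
  rcases toVec_mkS hu with h1 | h1 <;> rcases toVec_mkS hv with h2 | h2 <;>
    rw [h] at h1 <;> rw [h1] at h2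
  · exact Or.inl h2
  · exact Or.inr h2
  · exact Or.inr (by rw [← h2, neg_neg])
  · exact Or.inl (neg_injective h2)

lemma coprime_of_det2 {u v : V} (h : |det2 u v| = 1) : IsCoprime u.1 u.2 := by
  rcases (abs_eq (by norm_num : (0:ℤ) ≤ 1)).mp h with h1 | h1
  · exact ⟨v.2, -v.1, by simp [det2] at h1; linarith⟩
  · exact ⟨-v.2, v.1, by simp [det2] at h1; linarith⟩

lemma det2_toVec_ne {u v : V} (h : det2 u v ≠ 0) (hu : IsCoprime u.1 u.2)
    (hv : IsCoprime v.1 v.2) : mkS u ≠ mkS v := by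
  intro he
  rcases mkS_inj hu hv he with h' | h'
  · rw [h'] at h; exact h (det2_self v)
  · apply h; rw [h']; simp [det2]; ring

lemma fareyNbr_iff {s t : Slope} :
    FareyNbr s t ↔ |det2 (toVec s) (toVec t)| = 1 := by
  constructor
  · exact fun h => h.2
  · intro h
    refine ⟨?_, h⟩
    intro he
    subst he
    rw [det2_self] at h
    norm_num at h

lemma farey_mkS {u v : V} (h : |det2 u v| = 1) : FareyNbr (mkS u) (mkS v) := by
  have hu := coprime_of_det2 h
  have hv : IsCoprime v.1 v.2 := by
    apply coprime_of_det2 (v := u)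
    rw [det2_comm, abs_neg]; exact h
  rw [fareyNbr_iff]
  rcases toVec_mkS hu with h1 | h1 <;> rcases toVec_mkS hv with h2 | h2 <;>
    rw [h1, h2] <;> simp only [det2, Prod.fst_neg, Prod.snd_neg] <;>
    [skip; rw [show u.1 * -v.2 - u.2 * -v.1 = -(u.1*v.2 - u.2*v.1) by ring, abs_neg];
     rw [show -u.1 * v.2 - -u.2 * v.1 = -(u.1*v.2 - u.2*v.1) by ring, abs_neg];
     rw [show -u.1 * -v.2 - -u.2 * -v.1 = (u.1*v.2 - u.2*v.1) by ring]] <;>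
    exact h

lemma cramer (u w z : V) :
    det2 u w * z.1 = det2 z w * u.1 + det2 u z * w.1 ∧
    det2 u w * z.2 = det2 z w * u.2 + det2 u z * w.2 := by
  constructor <;> simp [det2] <;> ring

lemma fan_grow {c : ℂ} (hc : 2 < ‖c‖) {t : ℕ → ℂ} {k : ℕ}
    (hrec : ∀ m, m + 2 ≤ k → t (m+2) = c * t (m+1) - t m)
    {m : ℕ} (hm : m + 2 ≤ k) (h1 : ‖t m‖ ≤ ‖t (m+1)‖)
    (h2 : t (m+1) ≠ 0) : ‖t (m+1)‖ < ‖t (m+2)‖ := by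
  have e := hrec m hm
  have hge : ‖c * t (m+1)‖ - ‖t m‖
      ≤ ‖c * t (m+1) - t m‖ := norm_sub_norm_le _ _
  rw [norm_mul] at hge
  have hpos : 0 < ‖t (m+1)‖ := by
    simpa [norm_pos_iff] using h2
  rw [e]
  nlinarith [norm_nonneg (t m), hge, hpos, h1, hc]

lemma fan_chain {c : ℂ} (hc : 2 < ‖c‖) {t : ℕ → ℂ} {k : ℕ}
    (hrec : ∀ m, m + 2 ≤ k → t (m+2) = c * t (m+1) - t m)
    {j : ℕ} (hj : ‖t j‖ < ‖t (j+1)‖) :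
    ∀ m, j ≤ m → m + 1 ≤ k → ‖t m‖ < ‖t (m+1)‖ := by
  intro m hjm
  induction m, hjm using Nat.le_induction with
  | base => intro _; exact hj
  | succ m hm ih =>
    intro hmk
    have hP : ‖t m‖ < ‖t (m+1)‖ := ih (by omega)
    have hne : t (m+1) ≠ 0 := by
      intro h0
      rw [h0] at hP
      simp at hP
      exact (norm_nonneg _).not_gt hP
    exact fan_grow hc hrec (by omega) hP.le hne

lemma fan_reach {c : ℂ} (hc : 2 < ‖c‖) {t : ℕ → ℂ} {k : ℕ}
    (hrec : ∀ m, m + 2 ≤ k → t (m+2) = c * t (m+1) - t m)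
    {j : ℕ} (hj : ‖t j‖ < ‖t (j+1)‖) :
    ∀ d m, j ≤ m → m + d = k → m < k → ‖t m‖ < ‖t k‖ := by
  intro d
  induction d with
  | zero => intro m _ he hlt; omega
  | succ d ih =>
    intro m hjm he hlt
    have h1 : ‖t m‖ < ‖t (m+1)‖ :=
      fan_chain hc hrec hj m hjm (by omega)
    by_cases hd : d = 0
    · have : m + 1 = k := by omega
      rwa [this] at h1
    · exact h1.trans (ih (m+1) (by omega) (by omega) (by omega))

lemma fan_max {c : ℂ} (hc : 2 < ‖c‖) {t : ℕ → ℂ} {k : ℕ}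
    (hrec : ∀ m, m + 2 ≤ k → t (m+2) = c * t (m+1) - t m)
    {n : ℕ} (hn0 : 0 < n) (hnk : n < k) :
    t n = 0 ∨ ‖t n‖ < max (‖t 0‖) (‖t k‖) := by
  by_cases htn : t n = 0
  · exact Or.inl htn
  right
  by_cases hA : ∃ j, j < n ∧ ‖t j‖ ≤ ‖t (j+1)‖ ∧ t (j+1) ≠ 0
  · obtain ⟨j, hjn, hle, hne⟩ := hA
    have hP : ‖t (j+1)‖ < ‖t (j+2)‖ :=
      fan_grow hc hrec (by omega) hle hne
    have : ‖t n‖ < ‖t k‖ := by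
      rcases eq_or_lt_of_le (show j + 1 ≤ n by omega) with he | hlt
      · exact fan_reach hc hrec hP (k - n) n (by omega) (by omega) hnk
      · exact fan_reach hc hrec hP (k - n) n (by omega) (by omega) hnk
    exact this.trans_le (le_max_right _ _)
  · push_neg at hA
    have hB : ∀ m, m ≤ n → t m = 0 ∨ ‖t m‖ < ‖t 0‖ ∨ m = 0 := by
      intro m
      induction m with
      | zero => intro _; exact Or.inr (Or.inr rfl)
      | succ m ih =>
        intro hmn
        have hm := ih (by omega)
        by_cases h0 : t (m+1) = 0
        · exact Or.inl h0
        have hlt : ‖t (m+1)‖ < ‖t m‖ := by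
          by_contra hcon
          push_neg at hcon
          exact h0 (hA m (by omega) hcon)
        rcases hm with h | h | h
        · rw [h] at hlt; simp at hlt
          exact absurd hlt (norm_nonneg _).not_gt
        · exact Or.inr (Or.inl (hlt.trans h))
        · subst h
          exact Or.inr (Or.inl hlt)
    rcases hB n le_rfl with h | h | h
    · exact absurd h htn
    · exact h.trans_le (le_max_left _ _)
    · omega

def vadd (u w : V) (n : ℤ) : V := (u.1 + n * w.1, u.2 + n * w.2)

@[simp] lemma vadd_zero (u w : V) : vadd u w 0 = u :=
  Prod.ext (by simp [vadd]) (by simp [vadd])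

lemma det2_vadd_w (u w : V) (n : ℤ) : det2 (vadd u w n) w = det2 u w := by
  simp [vadd, det2]; ring

lemma det2_w_vadd (u w : V) (n : ℤ) : det2 w (vadd u w n) = det2 w u := by
  simp [vadd, det2]; ring

lemma det2_vadd_vadd (u w : V) (m n : ℤ) :
    det2 (vadd u w m) (vadd u w n) = (n - m) * det2 u w := by
  simp [vadd, det2]; ring

lemma fareyNbr_symm {s t : Slope} (h : FareyNbr s t) : FareyNbr t s := by
  rw [fareyNbr_iff] at *
  rw [det2_comm, abs_neg]
  exact h

lemma fan_nbr {u w : V} (hd : |det2 u w| = 1) (m n : ℤ) (h : |n - m| = 1) :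
    FareyNbr (mkS (vadd u w m)) (mkS (vadd u w n)) := by
  apply farey_mkS
  rw [det2_vadd_vadd, abs_mul, h, hd, one_mul]

lemma fan_nbr_w {u w : V} (hd : |det2 u w| = 1) (n : ℤ) :
    FareyNbr (mkS w) (mkS (vadd u w n)) := by
  apply farey_mkS
  rw [det2_w_vadd, det2_comm, abs_neg]
  exact hd

lemma fan_triple {u w : V} (hd : |det2 u w| = 1) (m n : ℤ) (h : |n - m| = 1) :
    FareyTriple (mkS w) (mkS (vadd u w m)) (mkS (vadd u w n)) :=
  ⟨fan_nbr_w hd m, fan_nbr hd m n h, fan_nbr_w hd n⟩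

lemma fan_ne_two {u w : V} (hd : |det2 u w| = 1) (m n : ℤ) (h : m ≠ n) :
    mkS (vadd u w m) ≠ mkS (vadd u w n) := by
  apply det2_toVec_ne
  · rw [det2_vadd_vadd]
    intro hc
    rcases mul_eq_zero.mp hc with hc | hc
    · omega
    · rw [hc] at hd; norm_num at hd
  · apply coprime_of_det2 (v := w); rw [det2_vadd_w]; exact hd
  · apply coprime_of_det2 (v := w); rw [det2_vadd_w]; exact hd

lemma fan_rec {φ : Slope → ℂ} (hE : EdgeRel φ) {u w : V} (hd : |det2 u w| = 1) (n : ℤ) :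
    φ (mkS (vadd u w (n+2))) =
      φ (mkS w) * φ (mkS (vadd u w (n+1))) - φ (mkS (vadd u w n)) := by
  have h1 : FareyTriple (mkS w) (mkS (vadd u w (n+1))) (mkS (vadd u w n)) :=
    fan_triple hd (n+1) n (by simp)
  have h2 : FareyTriple (mkS w) (mkS (vadd u w (n+1))) (mkS (vadd u w (n+2))) :=
    fan_triple hd (n+1) (n+2) (by simp)
  have hne : mkS (vadd u w n) ≠ mkS (vadd u w (n+2)) := fan_ne_two hd n (n+2) (by omega)
  have := hE (mkS w) (mkS (vadd u w (n+1))) (mkS (vadd u w n)) (mkS (vadd u w (n+2))) h1 h2 hne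
  linear_combination this

def cpx (s : Slope) : ℕ := (slopeNum s).natAbs + (slopeDen s).natAbs

lemma cpx_toVec (s : Slope) : (cpx s : ℤ) = |(toVec s).1| + |(toVec s).2| := by
  show ((slopeNum s).natAbs + (slopeDen s).natAbs : ℕ) = (|slopeNum s| + |slopeDen s| : ℤ)
  rw [Nat.cast_add, Int.abs_eq_natAbs, Int.abs_eq_natAbs]

lemma cpx_mkS {v : V} (hco : IsCoprime v.1 v.2) : (cpx (mkS v) : ℤ) = |v.1| + |v.2| := by
  rcases toVec_mkS hco with h | h <;> rw [cpx_toVec, h]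
  rw [Prod.fst_neg, Prod.snd_neg, abs_neg, abs_neg]

lemma fan_cpx {u w : V} (hd : |det2 u w| = 1) {k n : ℕ} (hk : 1 ≤ k) (hn : n ≤ k) :
    cpx (mkS (vadd u w n)) ≤ max (cpx (mkS u)) (cpx (mkS (vadd u w k))) := by
  have hcop : ∀ m : ℤ, IsCoprime (vadd u w m).1 (vadd u w m).2 := by
    intro m
    apply coprime_of_det2 (v := w); rw [det2_vadd_w]; exact hd
  have hcu : IsCoprime u.1 u.2 := coprime_of_det2 hd
  set M : ℕ := max (cpx (mkS u)) (cpx (mkS (vadd u w (k:ℤ)))) with hM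
  have hkn : (0:ℤ) ≤ (k : ℤ) - (n : ℤ) := by omega
  have hn0 : (0:ℤ) ≤ (n:ℤ) := Int.natCast_nonneg n
  have hk0 : (0:ℤ) ≤ (k:ℤ) := Int.natCast_nonneg k
  have e1 : (k : ℤ) * (vadd u w (n:ℤ)).1 = ((k : ℤ) - n) * u.1 + (n : ℤ) * (vadd u w (k : ℤ)).1 := by
    simp only [vadd]; ring
  have e2 : (k : ℤ) * (vadd u w (n:ℤ)).2 = ((k : ℤ) - n) * u.2 + (n : ℤ) * (vadd u w (k : ℤ)).2 := by
    simp only [vadd]; ring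
  have b1 : (k:ℤ) * |(vadd u w (n:ℤ)).1| ≤ ((k:ℤ) - n) * |u.1| + (n:ℤ) * |(vadd u w (k:ℤ)).1| := by
    calc (k:ℤ) * |(vadd u w (n:ℤ)).1| = |(k:ℤ) * (vadd u w (n:ℤ)).1| := by
          rw [abs_mul, abs_of_nonneg hk0]
      _ = |((k : ℤ) - n) * u.1 + (n : ℤ) * (vadd u w (k : ℤ)).1| := by rw [e1]
      _ ≤ |((k : ℤ) - n) * u.1| + |(n : ℤ) * (vadd u w (k : ℤ)).1| := abs_add_le _ _
      _ = ((k:ℤ) - n) * |u.1| + (n:ℤ) * |(vadd u w (k:ℤ)).1| := by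
          rw [abs_mul, abs_mul, abs_of_nonneg hkn, abs_of_nonneg hn0]
  have b2 : (k:ℤ) * |(vadd u w (n:ℤ)).2| ≤ ((k:ℤ) - n) * |u.2| + (n:ℤ) * |(vadd u w (k:ℤ)).2| := by
    calc (k:ℤ) * |(vadd u w (n:ℤ)).2| = |(k:ℤ) * (vadd u w (n:ℤ)).2| := by
          rw [abs_mul, abs_of_nonneg hk0]
      _ = |((k : ℤ) - n) * u.2 + (n : ℤ) * (vadd u w (k : ℤ)).2| := by rw [e2]
      _ ≤ |((k : ℤ) - n) * u.2| + |(n : ℤ) * (vadd u w (k : ℤ)).2| := abs_add_le _ _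
      _ = ((k:ℤ) - n) * |u.2| + (n:ℤ) * |(vadd u w (k:ℤ)).2| := by
          rw [abs_mul, abs_mul, abs_of_nonneg hkn, abs_of_nonneg hn0]
  have hmax1 : |u.1| + |u.2| ≤ (M : ℤ) := by
    rw [← cpx_mkS hcu]
    exact_mod_cast le_max_left _ _
  have hmax2 : |(vadd u w (k:ℤ)).1| + |(vadd u w (k:ℤ)).2| ≤ (M : ℤ) := by
    rw [← cpx_mkS (hcop (k:ℤ))]
    exact_mod_cast le_max_right _ _
  have c1 := mul_le_mul_of_nonneg_left hmax1 hkn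
  have c2 := mul_le_mul_of_nonneg_left hmax2 hn0
  have key : (k:ℤ) * ((cpx (mkS (vadd u w (n:ℤ)))) : ℤ) ≤ (k:ℤ) * (M : ℤ) := by
    rw [cpx_mkS (hcop (n:ℤ))]
    nlinarith [b1, b2, c1, c2]
  have hkpos : (0:ℤ) < (k:ℤ) := by exact_mod_cast hk
  have := le_of_mul_le_mul_left key hkpos
  exact_mod_cast this

lemma neighbor_step1 {x y z : Slope} (hxy : FareyNbr x y) (hyz : FareyNbr y z) (hxz : x ≠ z) :
    ∃ m : ℤ, m ≠ 0 ∧ mkS (vadd (toVec x) (toVec y) m) = z := by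
  have hd1 : |det2 (toVec x) (toVec y)| = 1 := (fareyNbr_iff).mp hxy
  have hd2 : |det2 (toVec y) (toVec z)| = 1 := (fareyNbr_iff).mp hyz
  set u := toVec x with hu
  set wv := toVec y with hw
  set zv := toVec z with hz
  have hsq : det2 u wv * det2 u wv = 1 := by
    rcases (abs_eq (by norm_num : (0:ℤ) ≤ 1)).mp hd1 with h | h <;> rw [h] <;> ring
  have hcr := cramer u wv zv
  have hz1 : zv.1 = (det2 u wv * det2 zv wv) * u.1 + (det2 u wv * det2 u zv) * wv.1 := by
    linear_combination det2 u wv * hcr.1 - zv.1 * hsq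
  have hz2 : zv.2 = (det2 u wv * det2 zv wv) * u.2 + (det2 u wv * det2 u zv) * wv.2 := by
    linear_combination det2 u wv * hcr.2 - zv.2 * hsq
  have hεabs : det2 u wv * det2 zv wv = 1 ∨ det2 u wv * det2 zv wv = -1 := by
    have habs : |det2 u wv * det2 zv wv| = 1 := by
      rw [abs_mul, hd1, one_mul, det2_comm, abs_neg]
      exact hd2
    exact (abs_eq (by norm_num : (0:ℤ) ≤ 1)).mp habs
  set m : ℤ := det2 u wv * det2 u zv with hm
  rcases hεabs with hε1 | hε1
  · refine ⟨m, ?_, ?_⟩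
    · intro h0
      apply hxz
      have hzu : zv = u := by
        refine Prod.ext ?_ ?_
        · rw [hz1, hε1, h0]; ring
        · rw [hz2, hε1, h0]; ring
      rw [← mkS_toVec x, ← mkS_toVec z, ← hu, ← hz, hzu]
    · have hv : vadd u wv m = zv := by
        refine Prod.ext ?_ ?_
        · show u.1 + m * wv.1 = zv.1
          rw [hz1, hε1]; ring
        · show u.2 + m * wv.2 = zv.2
          rw [hz2, hε1]; ring
      rw [hv, hz, mkS_toVec]
  · refine ⟨-m, ?_, ?_⟩
    · intro h0
      apply hxz
      have h0' : m = 0 := by omega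
      have hzu : zv = -u := by
        refine Prod.ext ?_ ?_
        · show zv.1 = -u.1
          rw [hz1, hε1, h0']; ring
        · show zv.2 = -u.2
          rw [hz2, hε1, h0']; ring
      rw [← mkS_toVec x, ← mkS_toVec z, ← hu, ← hz, hzu, mkS_neg]
    · have hv : vadd u wv (-m) = -zv := by
        refine Prod.ext ?_ ?_
        · show u.1 + (-m) * wv.1 = -zv.1
          rw [hz1, hε1]; ring
        · show u.2 + (-m) * wv.2 = -zv.2
          rw [hz2, hε1]; ring
      rw [hv, mkS_neg, hz, mkS_toVec]

lemma neighbor_decomp {x y z : Slope} (hxy : FareyNbr x y) (hyz : FareyNbr y z) (hxz : x ≠ z) :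
    ∃ (w : V) (k : ℕ), 1 ≤ k ∧ |det2 (toVec x) w| = 1 ∧ mkS w = y ∧
      mkS (vadd (toVec x) w (k : ℤ)) = z := by
  obtain ⟨m, hm0, hmz⟩ := neighbor_step1 hxy hyz hxz
  have hd1 : |det2 (toVec x) (toVec y)| = 1 := (fareyNbr_iff).mp hxy
  rcases lt_or_gt_of_ne hm0 with hm | hm
  · refine ⟨-toVec y, (-m).toNat, by omega, ?_, ?_, ?_⟩
    · have : det2 (toVec x) (-toVec y) = -det2 (toVec x) (toVec y) := by
        simp [det2]; ring
      rw [this, abs_neg]; exact hd1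
    · rw [mkS_neg, mkS_toVec]
    · have hcast : ((-m).toNat : ℤ) = -m := Int.toNat_of_nonneg (by omega)
      have : vadd (toVec x) (-toVec y) ((-m).toNat : ℤ) = vadd (toVec x) (toVec y) m := by
        simp only [vadd, hcast]
        refine Prod.ext ?_ ?_ <;> simp <;> ring
      rw [this, hmz]
  · refine ⟨toVec y, m.toNat, by omega, hd1, mkS_toVec y, ?_⟩
    rw [Int.toNat_of_nonneg (by omega), hmz]

lemma flip {φ : Slope → ℂ} (hE : EdgeRel φ) {x y z : Slope}
    (hxy : FareyNbr x y) (hyz : FareyNbr y z) (hxz : x ≠ z)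
    (hy2 : 2 < ‖φ y‖) :
    ∃ (k : ℕ) (p : ℕ → Slope), 1 ≤ k ∧ p 0 = x ∧ p k = z ∧
      (∀ n, n < k → FareyNbr (p n) (p (n+1))) ∧
      (∀ n, 0 < n → n < k → (φ (p n) = 0 ∨
        ‖φ (p n)‖ < max (‖φ x‖) (‖φ z‖))) ∧
      (∀ n, n ≤ k → cpx (p n) ≤ max (cpx x) (cpx z)) := by
  obtain ⟨w, k, hk, hd, hwy, hzk⟩ := neighbor_decomp hxy hyz hxz
  set u := toVec x with hu
  set p : ℕ → Slope := fun n => mkS (vadd u w (n : ℤ)) with hp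
  have hp0 : p 0 = x := by
    simp only [hp, Nat.cast_zero, vadd_zero, hu, mkS_toVec]
  have hpk : p k = z := hzk
  refine ⟨k, p, hk, hp0, hpk, ?_, ?_, ?_⟩
  · intro n _
    have : ((n+1 : ℕ) : ℤ) - (n : ℕ) = 1 := by push_cast; ring
    exact fan_nbr hd _ _ (by rw [this]; norm_num)
  · intro n hn0 hnk
    have hrec : ∀ m : ℕ, m + 2 ≤ k →
        (fun i : ℕ => φ (p i)) (m+2) = φ y * (fun i : ℕ => φ (p i)) (m+1) - (fun i : ℕ => φ (p i)) m := by
      intro m _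
      simp only [hp]
      have e2 : ((m+2 : ℕ) : ℤ) = (m : ℤ) + 2 := by push_cast; ring
      have e1 : ((m+1 : ℕ) : ℤ) = (m : ℤ) + 1 := by push_cast; ring
      rw [e2, e1, ← hwy]
      exact fan_rec hE hd (m : ℤ)
    have := fan_max (t := fun i : ℕ => φ (p i)) (by rw [← hwy] at hy2 ⊢; exact hy2) hrec hn0 hnk
    beta_reduce at this
    rw [hp0, hpk] at this
    exact this
  · intro n hn
    have := fan_cpx hd hk hn
    rw [show mkS u = x from by rw [hu, mkS_toVec]] at this
    rw [show mkS (vadd u w (k:ℤ)) = z from hzk] at this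
    exact this

lemma exists_smaller (r : ℚ) (h2 : 2 ≤ r.den) :
    ∃ s : Slope, FareyNbr (some r) s ∧ cpx s < cpx (some r) := by
  have hco : IsCoprime (r.num) ((r.den : ℤ)) := toVec_coprime (some r)
  obtain ⟨a0, b0, hab⟩ := hco
  set q : ℤ := (r.den : ℤ) with hqdef
  have hq2 : (2:ℤ) ≤ q := by rw [hqdef]; exact_mod_cast h2
  set b : ℤ := a0 % q with hb
  have hb0 : 0 ≤ b := Int.emod_nonneg a0 (by omega)
  have hbq : b < q := Int.emod_lt_of_pos a0 (by omega)
  have hdvd : q ∣ (b * r.num - 1) := by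
    refine ⟨-b0 - (a0 / q) * r.num, ?_⟩
    rw [hb, Int.emod_def]
    linear_combination hab
  have hbne : b ≠ 0 := by
    intro h0
    rw [h0] at hdvd
    have : q ∣ 1 := by
      rcases hdvd with ⟨c, hc⟩
      exact ⟨-c, by linarith⟩
    have := Int.le_of_dvd (by norm_num) this
    omega
  set a : ℤ := (b * r.num - 1) / q with ha
  have hqa : q * a = b * r.num - 1 := Int.mul_ediv_cancel' hdvd
  have hdet : det2 (r.num, q) (a, b) = 1 := by
    show r.num * b - q * a = 1
    rw [hqa]; ring
  have hdet' : |det2 (r.num, q) (a, b)| = 1 := by rw [hdet]; rfl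
  have hnbr : FareyNbr (some r) (mkS (a, b)) := by
    have := farey_mkS hdet'
    have he : mkS ((r.num, q) : V) = some r := by
      have := mkS_toVec (some r)
      exact this
    rwa [he] at this
  refine ⟨mkS (a, b), hnbr, ?_⟩
  have hcop : IsCoprime (a, b).1 (a, b).2 := by
    apply coprime_of_det2 (v := ((r.num, q) : V))
    have : det2 ((a, b) : V) ((r.num, q) : V) = -1 := by
      show a * q - b * r.num = -1
      nlinarith [hqa]
    rw [this]; rfl
  have hcs : (cpx (mkS (a, b)) : ℤ) = |a| + b := by
    rw [cpx_mkS hcop]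
    simp [abs_of_nonneg hb0]
  have hcr : (cpx (some r) : ℤ) = |r.num| + q := by
    rw [cpx_toVec]
    show |r.num| + |q| = |r.num| + q
    rw [abs_of_nonneg (show (0:ℤ) ≤ q by omega)]
  have hpne : r.num ≠ 0 := by
    intro h0
    have : IsCoprime (0 : ℤ) q := by
      rw [← h0]; exact toVec_coprime (some r)
    have := isCoprime_zero_left.mp this
    rcases Int.isUnit_iff.mp this with h | h <;> omega
  have hp1 : 1 ≤ |r.num| := by
    rcases abs_pos.mpr hpne with h
    omega
  have haP : q * |a| ≤ q * |r.num| - |r.num| + 1 := by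
    have h1 : |q * a| = q * |a| := by rw [abs_mul, abs_of_nonneg (by omega)]
    have h2 : |b * r.num - 1| ≤ |b * r.num| + 1 := by
      calc |b * r.num - 1| ≤ |b * r.num| + |(1:ℤ)| := abs_sub _ _
        _ = |b * r.num| + 1 := by norm_num
    have h3 : |b * r.num| = b * |r.num| := by rw [abs_mul, abs_of_nonneg hb0]
    have h4 : b * |r.num| ≤ (q - 1) * |r.num| := by
      apply mul_le_mul_of_nonneg_right (by omega) (by omega)
    rw [← h1, hqa]
    nlinarith [h2, h3, h4]
  have haa : |a| ≤ |r.num| := by nlinarith [haP, hp1, hq2]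
  have : (cpx (mkS (a, b)) : ℤ) < (cpx (some r) : ℤ) := by
    rw [hcs, hcr]; omega
  exact_mod_cast this

lemma cpx_pos (s : Slope) : 1 ≤ cpx s := by
  cases s with
  | none => simp [cpx, slopeNum, slopeDen]
  | some r =>
    have : 1 ≤ r.den := r.pos
    simp [cpx, slopeNum, slopeDen]
    omega

lemma to_inf : ∀ (c : ℕ) (s : Slope), cpx s ≤ c →
    ∃ l : List Slope, l ≠ [] ∧ l.head? = some s ∧ l.getLast? = some (none : Slope) ∧
      l.IsChain FareyNbr := by
  intro c
  induction c with
  | zero => intro s hs; exact absurd (le_trans (cpx_pos s) hs) (by norm_num)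
  | succ c ih =>
    intro s hs
    match s with
    | none => exact ⟨[none], by simp, rfl, rfl, List.isChain_singleton _⟩
    | some r =>
      by_cases h1 : r.den = 1
      · refine ⟨[some r, none], by simp, rfl, rfl, ?_⟩
        refine List.isChain_cons_cons.mpr ⟨?_, List.isChain_singleton _⟩
        rw [fareyNbr_iff]
        show |det2 (r.num, (r.den : ℤ)) (1, 0)| = 1
        simp [det2, h1]
      · have hd0 : r.den ≠ 0 := r.den_ne_zero
        have h2 : 2 ≤ r.den := by omega
        obtain ⟨s', hnbr, hlt⟩ := exists_smaller r h2
        have hcs : cpx (some r) ≤ c + 1 := hs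
        obtain ⟨l, hne, hh, hl, hc⟩ := ih s' (by omega)
        refine ⟨some r :: l, by simp, rfl, ?_, ?_⟩
        · rw [show some r :: l = [some r] ++ l from rfl, List.getLast?_append_of_ne_nil _ hne]
          exact hl
        · cases l with
          | nil => exact absurd rfl hne
          | cons hd tl =>
            refine List.isChain_cons_cons.mpr ⟨?_, hc⟩
            have : hd = s' := by
              simp only [List.head?] at hh
              exact (Option.some_injective _ hh).symm ▸ rfl
            rw [this]
            exact hnbr

lemma exists_path (a b : Slope) :
    ∃ l : List Slope, l.IsChain FareyNbr ∧ l.head? = some a ∧ l.getLast? = some b := by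
  obtain ⟨la, hane, hah, hal, hac⟩ := to_inf (cpx a) a le_rfl
  obtain ⟨lb, hbne, hbh, hbl, hbc⟩ := to_inf (cpx b) b le_rfl
  have hrc : lb.reverse.IsChain FareyNbr := by
    rw [List.isChain_reverse]
    exact hbc.imp (fun _ _ h => fareyNbr_symm h)
  have hrh : lb.reverse.head? = some (none : Slope) := by
    rw [List.head?_reverse]; exact hbl
  have hrl : lb.reverse.getLast? = some b := by
    rw [← List.head?_reverse, List.reverse_reverse]; exact hbh
  cases hrev : lb.reverse with
  | nil => rw [hrev] at hrh; simp at hrh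
  | cons h0 t =>
    rw [hrev] at hrh hrl hrc
    have h0n : h0 = (none : Slope) := by
      simp only [List.head?] at hrh
      exact Option.some_injective _ hrh
    subst h0n
    refine ⟨la ++ t, ?_, ?_, ?_⟩
    · rw [List.isChain_append]
      refine ⟨hac, (List.isChain_cons.mp hrc).2, ?_⟩
      intro u hu v hv
      rw [hal] at hu
      have hu' : u = (none : Slope) := by
        have := hu
        simp at this
        exact this.symm
      subst hu'
      exact (List.isChain_cons.mp hrc).1 v hv
    · rw [List.head?_append_of_ne_nil _ hane]; exact hah
    · cases ht : t with
      | nil =>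
        rw [ht] at hrl
        have hb' : (none : Slope) = b := by simpa using hrl
        simp only [List.append_nil]
        rw [hal, hb']
      | cons t0 tt =>
        rw [List.getLast?_append_of_ne_nil _ (by simp [ht])]
        rw [ht] at hrl
        rw [show ((none : Slope) :: t0 :: tt) = [(none : Slope)] ++ (t0 :: tt) from rfl,
          List.getLast?_append_of_ne_nil _ (by simp)] at hrl
        exact hrl

lemma head?_append_cons (l : List Slope) (x : Slope) (l' l'' : List Slope) :
    (l ++ x :: l').head? = (l ++ x :: l'').head? := by
  cases l <;> simp

lemma getLast?_cons_cons' (x y : Slope) (l : List Slope) :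
    ((x :: y :: l) : List Slope).getLast? = (y :: l).getLast? :=
  List.getLast?_cons_cons

lemma chain'_map_range (p : ℕ → Slope) (k : ℕ)
    (h : ∀ m < k, FareyNbr (p m) (p (m+1))) :
    List.IsChain FareyNbr ((List.range (k+1)).map p) := by
  rw [List.isChain_iff_getElem]
  intro i hi
  have hlen : (List.map p (List.range (k+1))).length = k + 1 := by simp
  rw [hlen] at hi
  simp only [List.get_eq_getElem, List.getElem_map, List.getElem_range]
  exact h i (by omega)

lemma mem_split_interior : ∀ (γ : List Slope) (y : Slope), y ∈ γ →
    γ.head? ≠ some y → γ.getLast? ≠ some y →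
    ∃ l₁ x z l₂, γ = l₁ ++ x :: y :: z :: l₂ := by
  intro γ
  induction γ with
  | nil => intro y h; simp at h
  | cons v rest ih =>
    intro y hmem hh hl
    have hvy : v ≠ y := by
      intro h
      exact hh (by rw [h]; rfl)
    have hyrest : y ∈ rest := by
      rcases List.mem_cons.mp hmem with h | h
      · exact absurd h.symm hvy
      · exact h
    cases rest with
    | nil => simp at hyrest
    | cons w rest2 =>
      by_cases hwy : w = y
      · subst hwy
        cases rest2 with
        | nil =>
          exfalso
          apply hl
          rfl
        | cons z l₂ => exact ⟨[], v, z, l₂, rfl⟩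
      · have hmem2 : y ∈ w :: rest2 := by
          rcases List.mem_cons.mp hyrest with h | h
          · exact absurd h.symm hwy
          · exact List.mem_cons.mpr (Or.inr h)
        have hh2 : (w :: rest2).head? ≠ some y := by
          simp only [List.head?]
          intro hcon
          exact hwy (Option.some_injective _ hcon)
        have hl2 : (w :: rest2).getLast? ≠ some y := by
          rwa [List.getLast?_cons_cons] at hl
        obtain ⟨l₁, x, z, l₂, he⟩ := ih y hmem2 hh2 hl2
        exact ⟨v :: l₁, x, z, l₂, by rw [List.cons_append, ← he]⟩

lemma le_foldr_max : ∀ (l : List ℝ) (init : ℝ) (x : ℝ), x ∈ l → x ≤ l.foldr max init := by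
  intro l
  induction l with
  | nil => intro _ x h; simp at h
  | cons v rest ih =>
    intro init x hx
    rcases List.mem_cons.mp hx with h | h
    · subst h; exact le_max_left _ _
    · exact le_trans (ih init x h) (le_max_right _ _)

lemma le_foldr_max_nat : ∀ (l : List ℕ) (init : ℕ) (x : ℕ), x ∈ l → x ≤ l.foldr max init := by
  intro l
  induction l with
  | nil => intro _ x h; simp at h
  | cons v rest ih =>
    intro init x hx
    rcases List.mem_cons.mp hx with h | h
    · subst h; exact le_max_left _ _
    · exact le_trans (ih init x h) (le_max_right _ _)

def SB (C0 : ℕ) : Finset Slope :=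
  ((Finset.Icc (-(C0:ℤ)) (C0:ℤ)) ×ˢ (Finset.Icc (-(C0:ℤ)) (C0:ℤ))).image mkS

lemma mem_SB {C0 : ℕ} {s : Slope} (h : cpx s ≤ C0) : s ∈ SB C0 := by
  refine Finset.mem_image.mpr ⟨toVec s, ?_, mkS_toVec s⟩
  have h' : |(toVec s).1| + |(toVec s).2| ≤ (C0:ℤ) := by
    rw [← cpx_toVec]; exact_mod_cast h
  have h1 := abs_nonneg (toVec s).1
  have h2 := abs_nonneg (toVec s).2
  rw [Finset.mem_product]
  constructor <;> rw [Finset.mem_Icc] <;> constructor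
  · have := abs_le.mp (show |(toVec s).1| ≤ (C0:ℤ) by omega); exact this.1
  · have := abs_le.mp (show |(toVec s).1| ≤ (C0:ℤ) by omega); exact this.2
  · have := abs_le.mp (show |(toVec s).2| ≤ (C0:ℤ) by omega); exact this.1
  · have := abs_le.mp (show |(toVec s).2| ≤ (C0:ℤ) by omega); exact this.2

lemma inner_loop {φ : Slope → ℂ} (hE : EdgeRel φ) {K : ℝ} (hK : 2 ≤ K)
    {C0 : ℕ} {a b : Slope} {F : Finset Slope} {y : Slope}
    (hyK : K < ‖φ y‖)
    (hFy : ∀ f ∈ F, K < ‖φ f‖ ∧ ‖φ y‖ ≤ ‖φ f‖)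
    (hay : a ≠ y) (hby : b ≠ y) :
    ∀ (c : ℕ) (γ : List Slope), γ.count y ≤ c →
    γ.IsChain FareyNbr → γ.head? = some a → γ.getLast? = some b →
    (∀ v ∈ γ, cpx v ≤ C0) → (∀ v ∈ γ, ‖φ v‖ ≤ ‖φ y‖) →
    (∀ v ∈ γ, v ∉ F) →
    ∃ γ' : List Slope, γ'.IsChain FareyNbr ∧ γ'.head? = some a ∧ γ'.getLast? = some b ∧
      (∀ v ∈ γ', cpx v ≤ C0) ∧ (∀ v ∈ γ', ‖φ v‖ ≤ ‖φ y‖) ∧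
      (∀ v ∈ γ', v ∉ F) ∧ y ∉ γ' := by
  have hy2 : 2 < ‖φ y‖ := lt_of_le_of_lt hK hyK
  intro c
  induction c with
  | zero =>
    intro γ hcount hch hh hl hcx hval hF
    exact ⟨γ, hch, hh, hl, hcx, hval, hF, List.count_eq_zero.mp (by omega)⟩
  | succ c ih =>
    intro γ hcount hch hh hl hcx hval hF
    by_cases hyin : y ∈ γ
    case neg => exact ⟨γ, hch, hh, hl, hcx, hval, hF, hyin⟩
    have hhy : γ.head? ≠ some y := by rw [hh]; intro hcon; exact hay (Option.some_injective _ hcon)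
    have hly : γ.getLast? ≠ some y := by rw [hl]; intro hcon; exact hby (Option.some_injective _ hcon)
    obtain ⟨l₁, x, z, l₂, hsplit⟩ := mem_split_interior γ y hyin hhy hly
    subst hsplit
    -- decompose the chain
    rw [List.isChain_append] at hch
    obtain ⟨C1, C2, J⟩ := hch
    have hxy : FareyNbr x y := (List.isChain_cons_cons.mp C2).1
    have C3 : List.IsChain FareyNbr (y :: z :: l₂) := (List.isChain_cons_cons.mp C2).2
    have hyz : FareyNbr y z := (List.isChain_cons_cons.mp C3).1
    have C4 : List.IsChain FareyNbr (z :: l₂) := (List.isChain_cons_cons.mp C3).2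
    have hxmem : x ∈ l₁ ++ x :: y :: z :: l₂ := by simp
    have hzmem : z ∈ l₁ ++ x :: y :: z :: l₂ := by simp
    have hxyne : x ≠ y := hxy.1
    have hyzne : y ≠ z := hyz.1
    -- count bookkeeping
    have hcnt : l₁.count y + l₂.count y ≤ c := by
      rw [List.count_append] at hcount
      simp only [List.count_cons] at hcount
      have hzy : z ≠ y := fun h => hyzne h.symm
      have e1 : (x == y) = false := by simp [hxyne]
      have e2 : (z == y) = false := by simp [hzy]
      have e3 : (y == y) = true := by simp
      rw [e1, e2, e3] at hcount
      simp at hcount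
      omega
    by_cases hxz : x = z
    · -- degenerate flip: drop y and z
      subst hxz
      have hsub : ∀ v, v ∈ l₁ ++ x :: l₂ → v ∈ l₁ ++ x :: y :: x :: l₂ := by
        intro v hv
        simp only [List.mem_append, List.mem_cons] at hv ⊢
        tauto
      apply ih (l₁ ++ x :: l₂) ?_ ?_ ?_ ?_ ?_ ?_ ?_
      · rw [List.count_append, List.count_cons]
        have e1 : (x == y) = false := by simp [hxyne]
        rw [e1]
        simp
        omega
      · rw [List.isChain_append]
        refine ⟨C1, ?_, ?_⟩
        · rw [List.isChain_cons]
          exact ⟨(List.isChain_cons.mp C4).1, (List.isChain_cons.mp C4).2⟩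
        · intro u hu w hw
          simp only [List.head?] at hw
          apply J u hu
          simp only [List.head?]
          exact hw
      · rw [head?_append_cons l₁ x l₂ (y :: x :: l₂)]
        exact hh
      · rw [List.getLast?_append_cons]
        rw [List.getLast?_append_cons, getLast?_cons_cons', getLast?_cons_cons'] at hl
        exact hl
      · intro v hv; exact hcx v (hsub v hv)
      · intro v hv; exact hval v (hsub v hv)
      · intro v hv; exact hF v (hsub v hv)
    · -- true flip
      obtain ⟨k, p, hk, hp0, hpk, hnbr, hvalp, hcpxp⟩ := flip hE hxy hyz hxz hy2
      set fanAll : List Slope := (List.range (k+1)).map p with hfan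
      have hfanne : fanAll ≠ [] := by simp [hfan]
      have hfanh : fanAll.head? = some x := by
        rw [hfan, List.range_succ_eq_map, List.map_cons]
        simp [hp0]
      have hfanl : fanAll.getLast? = some z := by
        rw [hfan, show k + 1 = k.succ from rfl, List.range_succ, List.map_append]
        rw [List.getLast?_append_of_ne_nil _ (by simp)]
        simp [hpk]
      have hfanchain : fanAll.IsChain FareyNbr := chain'_map_range p k hnbr
      have hfanmem : ∀ v ∈ fanAll, ∃ i, i ≤ k ∧ v = p i := by
        intro v hv
        rw [hfan, List.mem_map] at hv
        obtain ⟨i, hi, he⟩ := hv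
        exact ⟨i, by have := List.mem_range.mp hi; omega, he.symm⟩
      -- properties of fan vertices
      have hfan_cpx : ∀ v ∈ fanAll, cpx v ≤ C0 := by
        intro v hv
        obtain ⟨i, hik, rfl⟩ := hfanmem v hv
        calc cpx (p i) ≤ max (cpx x) (cpx z) := hcpxp i hik
          _ ≤ C0 := max_le (hcx x hxmem) (hcx z hzmem)
      have hfan_val : ∀ v ∈ fanAll, ‖φ v‖ ≤ ‖φ y‖ := by
        intro v hv
        obtain ⟨i, hik, rfl⟩ := hfanmem v hv
        rcases Nat.eq_zero_or_pos i with h0 | hpos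
        · subst h0; rw [hp0]; exact hval x hxmem
        rcases eq_or_lt_of_le hik with hke | hik'
        · subst hke; rw [hpk]; exact hval z hzmem
        rcases hvalp i hpos hik' with h | h
        · rw [h]
          simp only [norm_zero]
          positivity
        · exact le_of_lt (lt_of_lt_of_le h (max_le (hval x hxmem) (hval z hzmem)))
      have hfan_notF : ∀ v ∈ fanAll, v ∉ F := by
        intro v hv
        obtain ⟨i, hik, rfl⟩ := hfanmem v hv
        rcases Nat.eq_zero_or_pos i with h0 | hpos
        · subst h0; rw [hp0]; exact hF x hxmem
        rcases eq_or_lt_of_le hik with hke | hik'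
        · subst hke; rw [hpk]; exact hF z hzmem
        intro hin
        obtain ⟨hf1, hf2⟩ := hFy _ hin
        rcases hvalp i hpos hik' with h | h
        · rw [h] at hf1; simp at hf1; linarith
        · have : ‖φ (p i)‖ < ‖φ (p i)‖ :=
            lt_of_lt_of_le (lt_of_lt_of_le h (max_le (hval x hxmem) (hval z hzmem))) hf2
          exact absurd this (lt_irrefl _)
      have hfan_noy : ∀ v ∈ fanAll, v ≠ y := by
        intro v hv
        obtain ⟨i, hik, rfl⟩ := hfanmem v hv
        rcases Nat.eq_zero_or_pos i with h0 | hpos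
        · subst h0; rw [hp0]; exact hxyne
        rcases eq_or_lt_of_le hik with hke | hik'
        · subst hke; rw [hpk]; exact fun h => hyzne h.symm
        intro he
        rcases hvalp i hpos hik' with h | h
        · rw [he] at h; rw [h] at hy2; simp at hy2; linarith
        · rw [he] at h
          have := lt_of_lt_of_le h (max_le (hval x hxmem) (hval z hzmem))
          exact absurd this (lt_irrefl _)
      -- assemble new path
      apply ih (l₁ ++ (fanAll ++ l₂)) ?_ ?_ ?_ ?_ ?_ ?_ ?_
      · -- count
        rw [List.count_append, List.count_append]
        have hfz : fanAll.count y = 0 := by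
          rw [List.count_eq_zero]
          intro hcon
          exact hfan_noy y hcon rfl
        rw [hfz]
        omega
      · -- chain
        rw [List.isChain_append]
        refine ⟨C1, ?_, ?_⟩
        · rw [List.isChain_append]
          refine ⟨hfanchain, (List.isChain_cons.mp C4).2, ?_⟩
          intro u hu w hw
          rw [hfanl] at hu
          have : u = z := by have := hu; simp at this; exact this.symm
          subst this
          exact (List.isChain_cons.mp C4).1 w hw
        · intro u hu w hw
          rw [List.head?_append_of_ne_nil _ hfanne, hfanh] at hw
          have : w = x := by have := hw; simp at this; exact this.symm
          subst this
          apply J u hu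
          rfl
      · -- head?
        cases l₁ with
        | nil =>
          simp only [List.nil_append] at hh ⊢
          rw [List.head?_append_of_ne_nil _ hfanne, hfanh]
          rw [show (x :: y :: z :: l₂).head? = some x from rfl] at hh
          exact hh
        | cons u l =>
          rw [List.head?_append_of_ne_nil _ (by simp)] at hh ⊢
          exact hh
      · -- getLast?
        cases hl2 : l₂ with
        | nil =>
          subst hl2
          rw [List.getLast?_append_cons, getLast?_cons_cons', getLast?_cons_cons'] at hl
          simp only [List.append_nil]
          rw [List.getLast?_append_of_ne_nil _ hfanne, hfanl]
          simpa using hl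
        | cons w l =>
          subst hl2
          rw [List.getLast?_append_cons, getLast?_cons_cons', getLast?_cons_cons'] at hl
          rw [List.getLast?_cons_cons] at hl
          rw [List.getLast?_append_of_ne_nil _ (by simp : fanAll ++ w :: l ≠ []),
            List.getLast?_append_of_ne_nil _ (by simp : (w : Slope) :: l ≠ [])]
          exact hl
      · intro v hv
        simp only [List.mem_append] at hv
        rcases hv with h | h | h
        · exact hcx v (by simp [h])
        · exact hfan_cpx v h
        · exact hcx v (by simp [h])
      · intro v hv
        simp only [List.mem_append] at hv
        rcases hv with h | h | h
        · exact hval v (by simp [h])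
        · exact hfan_val v h
        · exact hval v (by simp [h])
      · intro v hv
        simp only [List.mem_append] at hv
        rcases hv with h | h | h
        · exact hF v (by simp [h])
        · exact hfan_notF v h
        · exact hF v (by simp [h])

lemma outer {φ : Slope → ℂ} (hE : EdgeRel φ) {K : ℝ} (hK : 2 ≤ K)
    {C0 : ℕ} {a b : Slope}
    (ha : ‖φ a‖ ≤ K) (hb : ‖φ b‖ ≤ K) :
    ∀ (N : ℕ) (F : Finset Slope) (M : ℝ) (γ : List Slope),
    ((SB C0) \ F).card ≤ N →
    γ.IsChain FareyNbr → γ.head? = some a → γ.getLast? = some b →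
    (∀ v ∈ γ, cpx v ≤ C0) → (∀ v ∈ γ, ‖φ v‖ ≤ M) →
    (∀ f ∈ F, K < ‖φ f‖ ∧ M ≤ ‖φ f‖) →
    (∀ v ∈ γ, v ∉ F) →
    ∃ γ' : List Slope, γ'.IsChain FareyNbr ∧ γ'.head? = some a ∧ γ'.getLast? = some b ∧
      (∀ v ∈ γ', ‖φ v‖ ≤ K) := by
  intro N
  induction N with
  | zero =>
    intro F M γ hcard hch hh hl hcx hval hFc hF
    by_cases hclean : ∀ v ∈ γ, ‖φ v‖ ≤ K
    · exact ⟨γ, hch, hh, hl, hclean⟩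
    exfalso
    push_neg at hclean
    obtain ⟨v0, hv0mem, hv0⟩ := hclean
    have hane : γ.toFinset.Nonempty := ⟨v0, List.mem_toFinset.mpr hv0mem⟩
    obtain ⟨y, hymem', hymax'⟩ := Finset.exists_max_image γ.toFinset (fun v => ‖φ v‖) hane
    have hymem : y ∈ γ := List.mem_toFinset.mp hymem'
    have hyK : K < ‖φ y‖ :=
      lt_of_lt_of_le hv0 (hymax' v0 (List.mem_toFinset.mpr hv0mem))
    have hySB : y ∈ (SB C0) \ F :=
      Finset.mem_sdiff.mpr ⟨mem_SB (hcx y hymem), hF y hymem⟩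
    have : 0 < ((SB C0) \ F).card := Finset.card_pos.mpr ⟨y, hySB⟩
    omega
  | succ N ih =>
    intro F M γ hcard hch hh hl hcx hval hFc hF
    by_cases hclean : ∀ v ∈ γ, ‖φ v‖ ≤ K
    · exact ⟨γ, hch, hh, hl, hclean⟩
    push_neg at hclean
    obtain ⟨v0, hv0mem, hv0⟩ := hclean
    have hane : γ.toFinset.Nonempty := ⟨v0, List.mem_toFinset.mpr hv0mem⟩
    obtain ⟨y, hymem', hymax'⟩ := Finset.exists_max_image γ.toFinset (fun v => ‖φ v‖) hane
    have hymem : y ∈ γ := List.mem_toFinset.mp hymem'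
    have hymax : ∀ v ∈ γ, ‖φ v‖ ≤ ‖φ y‖ :=
      fun v hv => hymax' v (List.mem_toFinset.mpr hv)
    have hyK : K < ‖φ y‖ :=
      lt_of_lt_of_le hv0 (hymax v0 hv0mem)
    have hay : a ≠ y := by
      intro h; rw [← h] at hyK; exact absurd ha (not_le.mpr hyK)
    have hby : b ≠ y := by
      intro h; rw [← h] at hyK; exact absurd hb (not_le.mpr hyK)
    have hFy : ∀ f ∈ F, K < ‖φ f‖ ∧ ‖φ y‖ ≤ ‖φ f‖ := by
      intro f hf
      exact ⟨(hFc f hf).1, le_trans (hval y hymem) (hFc f hf).2⟩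
    obtain ⟨γ'', hch2, hh2, hl2, hcx2, hval2, hF2, hynot⟩ :=
      inner_loop hE hK hyK hFy hay hby (γ.count y) γ le_rfl hch hh hl hcx hymax hF
    have hySB : y ∈ (SB C0) \ F :=
      Finset.mem_sdiff.mpr ⟨mem_SB (hcx y hymem), hF y hymem⟩
    have hcard2 : ((SB C0) \ (insert y F)).card ≤ N := by
      rw [Finset.sdiff_insert]
      have := Finset.card_erase_of_mem hySB
      omega
    refine ih (insert y F) (‖φ y‖) γ'' hcard2 hch2 hh2 hl2 hcx2 hval2 ?_ ?_
    · intro f hf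
      rcases Finset.mem_insert.mp hf with h | h
      · subst h; exact ⟨hyK, le_rfl⟩
      · exact ⟨(hFy f h).1, (hFy f h).2⟩
    · intro v hv
      rw [Finset.mem_insert]
      push_neg
      refine ⟨?_, hF2 v hv⟩
      intro h; subst h; exact hynot hv

lemma list_get_zero (l : List Slope) (h : 0 < l.length) (a : Slope) (hh : l.head? = some a) :
    l.get ⟨0, h⟩ = a := by
  cases l with
  | nil => simp at h
  | cons v t =>
    have : v = a := by simpa using hh
    simpa using this

lemma list_get_last (l : List Slope) (h : l ≠ []) (b : Slope) (hl : l.getLast? = some b)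
    (hlen : 0 < l.length) : l.get ⟨l.length - 1, by omega⟩ = b := by
  rw [List.get_eq_getElem, ← List.getLast_eq_getElem h]
  rw [List.getLast?_eq_getLast h] at hl
  exact Option.some_injective _ hl

end Farey



/-- Lemma 4.9 (Bowditch): for a trace map with `κ ≠ 2`, the set
`{s : |φ(s)| ≤ K}` spans a connected subgraph of the Farey graph, for `K ≥ 2`. -/
theorem stmt_12 (κ : ℂ) (hκ : κ ≠ 2) (φ : Slope → ℂ) (hφ : IsTraceMap φ κ)
    (K : ℝ) (hK : 2 ≤ K) (a b : Slope)
    (ha : ‖φ a‖ ≤ K) (hb : ‖φ b‖ ≤ K) :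
    ∃ m : ℕ, ∃ s : Fin (m + 1) → Slope,
      s 0 = a ∧ s (Fin.last m) = b ∧
      (∀ i : Fin m, FareyNbr (s i.castSucc) (s i.succ)) ∧
      (∀ i : Fin (m + 1), ‖φ (s i)‖ ≤ K) := by
  obtain ⟨hE, _⟩ := hφ
  obtain ⟨γ0, hch, hh, hl⟩ := Farey.exists_path a b
  set C0 : ℕ := (γ0.map Farey.cpx).foldr max 0 with hC0
  set M : ℝ := (γ0.map (fun v => ‖φ v‖)).foldr max 0 with hM
  have hcx : ∀ v ∈ γ0, Farey.cpx v ≤ C0 := fun v hv =>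
    Farey.le_foldr_max_nat _ _ _ (List.mem_map_of_mem hv)
  have hval : ∀ v ∈ γ0, ‖φ v‖ ≤ M := fun v hv =>
    Farey.le_foldr_max _ _ _ (List.mem_map_of_mem hv)
  obtain ⟨γ', hch', hh', hl', hKv⟩ :=
    Farey.outer hE hK ha hb ((Farey.SB C0) \ ∅).card ∅ M γ0 le_rfl hch hh hl hcx hval
      (by simp) (by simp)
  have hne : γ' ≠ [] := by
    intro h; rw [h] at hh'; simp at hh'
  have hlen : 0 < γ'.length := List.length_pos_iff.mpr hne
  refine ⟨γ'.length - 1, fun i => γ'.get ⟨i.val, by omega⟩, ?_, ?_, ?_, ?_⟩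
  · exact Farey.list_get_zero γ' hlen a hh'
  · show γ'.get ⟨(Fin.last (γ'.length - 1)).val, _⟩ = b
    have : (Fin.last (γ'.length - 1)).val = γ'.length - 1 := rfl
    exact Farey.list_get_last γ' hne b hl' hlen
  · intro i
    have hch2 := List.isChain_iff_getElem.mp hch' i.val (by have := i.isLt; omega)
    exact hch2
  · intro i
    apply hKv
    exact List.get_mem γ' _
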